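/- Let Ω = {ℓ, h} be a binary state space with prior p = p(ℓ) ∈ (0,1) and n = 2 receivers (beliefs identified with the probability of state ℓ). For every feasible collection (μ^ℓ, μ^h) of conditional belief distributions for prior p, the unconditional distribution μ = p·μ^ℓ + (1−p)·μ^h satisfies ∫_{[0,1]^2} |x_1 − x_2| dμ(x_1,x_2) ≤ 2p(1−p); moreover this bound is tight: equality holds for the feasible collection induced by revealing the state to receiver 2 and giving no information to receiver 1, namely μ^ℓ = δ_{(p,1)} and μ^h = δ_{(p,0)}. -/

import Mathlib

open MeasureTheory

noncomputable section

/-- In the binary-state case a belief is identified with the probability of state `ℓ`,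
a number in `[0,1]`. -/
abbrev BeliefI : Type := Set.Icc (0 : ℝ) 1

/-- States: `true` is the low state `ℓ`, `false` is the high state `h`. -/
abbrev StateL : Bool := true
abbrev StateH : Bool := false

/-- The joint distribution of the state and the two receivers' beliefs, for prior
`p = p(ℓ)` and conditional belief distributions `μl` (given `ℓ`) and `μh` (given `h`). -/
def jointPBin (p : ℝ) (μl μh : Measure (Fin 2 → BeliefI)) :
    Measure (Bool × (Fin 2 → BeliefI)) :=
  ENNReal.ofReal p • ((Measure.dirac StateL).prod μl) +
    ENNReal.ofReal (1 - p) • ((Measure.dirac StateH).prod μh)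

/-- Feasibility of a pair of conditional belief distributions in the two-receiver
binary-state problem: conditionally on the information `σ(x_i)` of each receiver `i`,
the conditional probability of the state `ℓ` is `x_i` and of the state `h` is `1 - x_i`. -/
def FeasibleBin (p : ℝ) (μl μh : Measure (Fin 2 → BeliefI)) : Prop :=
  IsProbabilityMeasure μl ∧ IsProbabilityMeasure μh ∧
  ∀ i : Fin 2,
    ((fun z : Bool × (Fin 2 → BeliefI) => (z.2 i).1)
      =ᵐ[jointPBin p μl μh]
      (jointPBin p μl μh)[Set.indicator {z : Bool × (Fin 2 → BeliefI) | z.1 = StateL}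
          (fun _ => (1 : ℝ)) |
        MeasurableSpace.comap (fun z : Bool × (Fin 2 → BeliefI) => z.2 i) inferInstance]) ∧
    ((fun z : Bool × (Fin 2 → BeliefI) => 1 - (z.2 i).1)
      =ᵐ[jointPBin p μl μh]
      (jointPBin p μl μh)[Set.indicator {z : Bool × (Fin 2 → BeliefI) | z.1 = StateH}
          (fun _ => (1 : ℝ)) |
        MeasurableSpace.comap (fun z : Bool × (Fin 2 → BeliefI) => z.2 i) inferInstance])

/-- the value of the binary-state two-receiver persuasion problem -/
def ValBin (p : ℝ) (vl vh : (Fin 2 → BeliefI) → ℝ) : ℝ :=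
  sSup { r : ℝ | ∃ μl μh : Measure (Fin 2 → BeliefI), FeasibleBin p μl μh ∧
    r = p * ∫ x, vl x ∂μl + (1 - p) * ∫ x, vh x ∂μh }

end


abbrev Bel := Fin 2 → BeliefI


noncomputable section PolarAux
open MeasureTheory

/-- the dual multiplier -/
def polarLam (p u : ℝ) : ℝ :=
  if u ≤ p then 1 - 2*(1-p)^2/(1-u) else 2*p^2/u - 1

lemma polarLam_measurable (p : ℝ) : Measurable (polarLam p) := by
  unfold polarLam
  exact Measurable.ite (measurableSet_le measurable_id measurable_const)
    (measurable_const.sub (measurable_const.div (measurable_const.sub measurable_id)))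
    ((measurable_const.div measurable_id).sub measurable_const)

lemma polarLam_abs_le {p : ℝ} (hp0 : 0 < p) (hp1 : p < 1) {u : ℝ} (hu0 : 0 ≤ u) (hu1 : u ≤ 1) :
    |polarLam p u| ≤ 3 := by
  unfold polarLam
  rw [abs_le]
  split_ifs with h
  · have h1 : 0 < 1 - u := by linarith
    have h2 : 0 ≤ 2*(1-p)^2/(1-u) := by positivity
    have h3 : 2*(1-p)^2/(1-u) ≤ 2 := by
      rw [div_le_iff₀ h1]; nlinarith
    constructor <;> linarith
  · push_neg at h
    have h1 : 0 < u := lt_trans hp0 h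
    have h2 : 0 ≤ 2*p^2/u := by positivity
    have h3 : 2*p^2/u ≤ 2 := by
      rw [div_le_iff₀ h1]; nlinarith
    constructor <;> linarith

lemma polar_key_h_one {p u v : ℝ} (hp0 : 0 < p) (hp1 : p < 1)
    (hu0 : 0 ≤ u) (hu1 : u ≤ 1) (hv0 : 0 ≤ v) (hv1 : v ≤ 1) :
    u - v ≤ 2*p^2 - polarLam p u * u - polarLam p v * v := by
  unfold polarLam
  split_ifs with hu hv hv
  · -- u ≤ p, v ≤ p
    have h1 : 0 < 1 - u := by linarith
    have h2 : 0 < 1 - v := by linarith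
    have e1 : 2*u - 2*p^2 ≤ 2*(1-p)^2*u/(1-u) := by
      rw [le_div_iff₀ h1]; nlinarith [sq_nonneg (u-p)]
    have e2 : (0:ℝ) ≤ 2*(1-p)^2*v/(1-v) := by positivity
    have r1 : (1 - 2*(1-p)^2/(1-u)) * u = u - 2*(1-p)^2*u/(1-u) := by
      field_simp
    have r2 : (1 - 2*(1-p)^2/(1-v)) * v = v - 2*(1-p)^2*v/(1-v) := by
      field_simp
    rw [r1, r2]; linarith
  · -- u ≤ p < v
    have h1 : 0 < 1 - u := by linarith
    push_neg at hv
    have h2 : 0 < v := lt_trans hp0 hv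
    have e2 : (0:ℝ) ≤ 2*(1-p)^2*u/(1-u) := by positivity
    have r1 : (1 - 2*(1-p)^2/(1-u)) * u = u - 2*(1-p)^2*u/(1-u) := by
      field_simp
    have r2 : (2*p^2/v - 1) * v = 2*p^2 - v := by field_simp
    rw [r1, r2]; linarith
  · -- v ≤ p < u
    push_neg at hu
    have h1 : 0 < u := lt_trans hp0 hu
    have h2 : 0 < 1 - v := by linarith
    have e2 : (0:ℝ) ≤ 2*(1-p)^2*v/(1-v) := by positivity
    have r1 : (2*p^2/u - 1) * u = 2*p^2 - u := by field_simp
    have r2 : (1 - 2*(1-p)^2/(1-v)) * v = v - 2*(1-p)^2*v/(1-v) := by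
      field_simp
    rw [r1, r2]; linarith
  · -- p < u, p < v
    push_neg at hu hv
    have h1 : 0 < u := lt_trans hp0 hu
    have h2 : 0 < v := lt_trans hp0 hv
    have r1 : (2*p^2/u - 1) * u = 2*p^2 - u := by field_simp
    have r2 : (2*p^2/v - 1) * v = 2*p^2 - v := by field_simp
    rw [r1, r2]; nlinarith

lemma polar_key_h {p u v : ℝ} (hp0 : 0 < p) (hp1 : p < 1)
    (hu0 : 0 ≤ u) (hu1 : u ≤ 1) (hv0 : 0 ≤ v) (hv1 : v ≤ 1) :
    |u - v| ≤ 2*p^2 - polarLam p u * u - polarLam p v * v := by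
  rw [abs_sub_le_iff]
  refine ⟨polar_key_h_one hp0 hp1 hu0 hu1 hv0 hv1, ?_⟩
  have := polar_key_h_one hp0 hp1 hv0 hv1 hu0 hu1
  linarith

lemma polar_key_l_one {p u v : ℝ} (hp0 : 0 < p) (hp1 : p < 1)
    (hu0 : 0 ≤ u) (hu1 : u ≤ 1) (hv0 : 0 ≤ v) (hv1 : v ≤ 1) :
    u - v ≤ 2*(1-p)^2 + polarLam p u * (1-u) + polarLam p v * (1-v) := by
  unfold polarLam
  split_ifs with hu hv hv
  · -- u ≤ p, v ≤ p
    have h1 : 0 < 1 - u := by linarith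
    have h2 : 0 < 1 - v := by linarith
    have r1 : (1 - 2*(1-p)^2/(1-u)) * (1-u) = (1-u) - 2*(1-p)^2 := by
      field_simp
    have r2 : (1 - 2*(1-p)^2/(1-v)) * (1-v) = (1-v) - 2*(1-p)^2 := by
      field_simp
    rw [r1, r2]; nlinarith [sq_nonneg (1-p)]
  · -- u ≤ p < v
    push_neg at hv
    have h1 : 0 < 1 - u := by linarith
    have h2 : 0 < v := lt_trans hp0 hv
    have r1 : (1 - 2*(1-p)^2/(1-u)) * (1-u) = (1-u) - 2*(1-p)^2 := by
      field_simp
    have r2 : (2*p^2/v - 1) * (1-v) = 2*p^2*(1-v)/v - (1-v) := by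
      field_simp
    have e2 : (0:ℝ) ≤ 2*p^2*(1-v)/v := div_nonneg (by nlinarith) h2.le
    rw [r1, r2]; linarith
  · -- v ≤ p < u
    push_neg at hu
    have h1 : 0 < u := lt_trans hp0 hu
    have h2 : 0 < 1 - v := by linarith
    have r1 : (2*p^2/u - 1) * (1-u) = 2*p^2*(1-u)/u - (1-u) := by
      field_simp
    have r2 : (1 - 2*(1-p)^2/(1-v)) * (1-v) = (1-v) - 2*(1-p)^2 := by
      field_simp
    have e1 : (0:ℝ) ≤ 2*p^2*(1-u)/u := div_nonneg (by nlinarith) h1.le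
    rw [r1, r2]; linarith
  · -- p < u, p < v
    push_neg at hu hv
    have h1 : 0 < u := lt_trans hp0 hu
    have h2 : 0 < v := lt_trans hp0 hv
    have r1 : (2*p^2/u - 1) * (1-u) = 2*p^2*(1-u)/u - (1-u) := by
      field_simp
    have r2 : (2*p^2/v - 1) * (1-v) = 2*p^2*(1-v)/v - (1-v) := by
      field_simp
    have e1 : (0:ℝ) ≤ 2*p^2*(1-u)/u := div_nonneg (by nlinarith) h1.le
    have e2 : 2 - 2*v - 2*(1-p)^2 ≤ 2*p^2*(1-v)/v := by
      rw [le_div_iff₀ h2]; nlinarith [sq_nonneg (v-p)]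
    rw [r1, r2]; linarith

lemma polar_key_l {p u v : ℝ} (hp0 : 0 < p) (hp1 : p < 1)
    (hu0 : 0 ≤ u) (hu1 : u ≤ 1) (hv0 : 0 ≤ v) (hv1 : v ≤ 1) :
    |u - v| ≤ 2*(1-p)^2 + polarLam p u * (1-u) + polarLam p v * (1-v) := by
  rw [abs_sub_le_iff]
  refine ⟨polar_key_l_one hp0 hp1 hu0 hu1 hv0 hv1, ?_⟩
  have := polar_key_l_one hp0 hp1 hv0 hv1 hu0 hu1
  linarith

end PolarAux




section MeasAux
open MeasureTheory

variable {α : Type*} [MeasurableSpace α]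

lemma integrable_bdd {μ : Measure α} [IsFiniteMeasure μ] {f : α → ℝ}
    (hf : AEStronglyMeasurable f μ) {C : ℝ} (hb : ∀ x, |f x| ≤ C) : Integrable f μ :=
  (integrable_const C).mono' hf
    (Filter.Eventually.of_forall fun x => by simpa [Real.norm_eq_abs] using hb x)

lemma integral_two_smul_add {p : ℝ} (hp0 : 0 ≤ p) (hp1 : p ≤ 1) (μ ν : Measure α)
    {f : α → ℝ} (hμ : Integrable f μ) (hν : Integrable f ν) :
    ∫ x, f x ∂(ENNReal.ofReal p • μ + ENNReal.ofReal (1 - p) • ν)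
      = p * ∫ x, f x ∂μ + (1 - p) * ∫ x, f x ∂ν := by
  rw [integral_add_measure (hμ.smul_measure ENNReal.ofReal_ne_top)
      (hν.smul_measure ENNReal.ofReal_ne_top),
    integral_smul_measure, integral_smul_measure, ENNReal.toReal_ofReal hp0,
    ENNReal.toReal_ofReal (by linarith)]
  simp [smul_eq_mul]

lemma stronglyMeasurable_comap' {β : Type*} [mβ : MeasurableSpace β] (f : α → β) {φ : β → ℝ}
    (hφ : Measurable φ) :
    StronglyMeasurable[MeasurableSpace.comap f mβ] fun a => φ (f a) := by
  have h : Measurable[MeasurableSpace.comap f mβ] fun a => φ (f a) := fun s hs =>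
    ⟨φ ⁻¹' s, hφ hs, rfl⟩
  exact h.stronglyMeasurable

lemma integral_mul_condexp_eq [m0 : MeasurableSpace α] (P : Measure α) [IsProbabilityMeasure P]
    {m : MeasurableSpace α} (hm : m ≤ m0) {g f : α → ℝ}
    (hgm : StronglyMeasurable[m] g) {C : ℝ} (hgb : ∀ a, |g a| ≤ C) (hf : Integrable f P) :
    ∫ a, g a * (P[f|m]) a ∂P = ∫ a, g a * f a ∂P := by
  have h2 : P[g * f|m] =ᵐ[P] g * P[f|m] :=
    condExp_stronglyMeasurable_mul_of_bound hm hgm hf C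
      (Filter.Eventually.of_forall fun a => by simpa [Real.norm_eq_abs] using hgb a)
  have h3 : ∫ a, (g * P[f|m]) a ∂P = ∫ a, (P[g * f|m]) a ∂P := (integral_congr_ae h2).symm
  have h4 : ∫ a, (P[g * f|m]) a ∂P = ∫ a, (g * f) a ∂P := integral_condExp hm
  simpa [Pi.mul_apply] using h3.trans h4

end MeasAux

section JointAux
open MeasureTheory


lemma jointPBin_isProb {p : ℝ} (hp0 : 0 ≤ p) (hp1 : p ≤ 1) (μl μh : Measure Bel)
    [IsProbabilityMeasure μl] [IsProbabilityMeasure μh] :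
    IsProbabilityMeasure (jointPBin p μl μh) := by
  constructor
  rw [jointPBin]
  simp only [Measure.coe_add, Measure.coe_smul, Pi.add_apply, Pi.smul_apply, measure_univ,
    smul_eq_mul, mul_one]
  rw [← ENNReal.ofReal_add hp0 (by linarith)]
  norm_num

lemma integral_jointPBin {p : ℝ} (hp0 : 0 ≤ p) (hp1 : p ≤ 1) (μl μh : Measure Bel)
    [IsProbabilityMeasure μl] [IsProbabilityMeasure μh] {f : Bool × Bel → ℝ}
    (hf : Measurable f) {C : ℝ} (hb : ∀ z, |f z| ≤ C) :
    ∫ z, f z ∂(jointPBin p μl μh)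
      = p * ∫ x, f (StateL, x) ∂μl + (1 - p) * ∫ x, f (StateH, x) ∂μh := by
  have hl : Integrable f ((Measure.dirac StateL).prod μl) :=
    integrable_bdd hf.aestronglyMeasurable hb
  have hh : Integrable f ((Measure.dirac StateH).prod μh) :=
    integrable_bdd hf.aestronglyMeasurable hb
  rw [jointPBin, integral_two_smul_add hp0 hp1 _ _ hl hh]
  rw [Measure.dirac_prod, Measure.dirac_prod,
    integral_map measurable_prodMk_left.aemeasurable hf.aestronglyMeasurable,
    integral_map measurable_prodMk_left.aemeasurable hf.aestronglyMeasurable]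

end JointAux




lemma measurable_val (i : Fin 2) : Measurable fun x : Bel => ((x i : BeliefI) : ℝ) :=
  measurable_subtype_coe.comp (measurable_pi_apply i)

lemma indL_measurable : Measurable
    (Set.indicator {z : Bool × Bel | z.1 = StateL} (fun _ => (1:ℝ))) := by
  have hS : MeasurableSet {z : Bool × Bel | z.1 = StateL} := by
    have : {z : Bool × Bel | z.1 = StateL} = Prod.fst ⁻¹' {StateL} := rfl
    rw [this]; exact measurable_fst (measurableSet_singleton _)
  exact measurable_const.indicator hS

lemma polar_bracket {p : ℝ} (hp0 : 0 < p) (hp1 : p < 1) (μl μh : Measure Bel)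
    [IsProbabilityMeasure μl] [IsProbabilityMeasure μh] (i : Fin 2)
    (hcond : (fun z : Bool × Bel => ((z.2 i : BeliefI) : ℝ))
      =ᵐ[jointPBin p μl μh]
      (jointPBin p μl μh)[Set.indicator {z : Bool × Bel | z.1 = StateL}
          (fun _ => (1 : ℝ)) |
        MeasurableSpace.comap (fun z : Bool × Bel => z.2 i) inferInstance]) :
    p * ∫ x, polarLam p (x i).1 * (1 - (x i).1) ∂μl
      = (1 - p) * ∫ x, polarLam p (x i).1 * (x i).1 ∂μh := by
  classical
  set P := jointPBin p μl μh with hP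
  haveI : IsProbabilityMeasure P := jointPBin_isProb hp0.le hp1.le μl μh
  have hmeas_proj : Measurable (fun z : Bool × Bel => z.2 i) :=
    (measurable_pi_apply i).comp measurable_snd
  have hm := measurable_iff_comap_le.mp hmeas_proj
  set g : Bool × Bel → ℝ := fun z => polarLam p ((z.2 i : BeliefI) : ℝ) with hg_def
  have hgm : StronglyMeasurable[MeasurableSpace.comap (fun z : Bool × Bel => z.2 i)
      inferInstance] g :=
    stronglyMeasurable_comap' (fun z : Bool × Bel => z.2 i)
      ((polarLam_measurable p).comp measurable_subtype_coe)
  have hgb : ∀ z : Bool × Bel, |g z| ≤ 3 := fun z =>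
    polarLam_abs_le hp0 hp1 (z.2 i).2.1 (z.2 i).2.2
  set find : Bool × Bel → ℝ :=
    Set.indicator {z : Bool × Bel | z.1 = StateL} (fun _ => (1:ℝ)) with hfind_def
  have hfind_meas : Measurable find := indL_measurable
  have hfind_bd : ∀ z, |find z| ≤ 1 := by
    intro z
    rw [hfind_def, Set.indicator_apply]
    split_ifs <;> norm_num
  have hfind_int : Integrable find P := integrable_bdd hfind_meas.aestronglyMeasurable hfind_bd
  have hgmeas : Measurable g := (polarLam_measurable p).comp
    (measurable_subtype_coe.comp hmeas_proj)
  -- step 1 : ∫ g * x̂ = ∫ g * find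
  have step1 : ∫ z, g z * ((z.2 i : BeliefI) : ℝ) ∂P = ∫ z, g z * find z ∂P := by
    have e0 : ∫ z, g z * ((z.2 i : BeliefI) : ℝ) ∂P
        = ∫ z, g z * (P[find|MeasurableSpace.comap (fun z : Bool × Bel => z.2 i)
            inferInstance]) z ∂P := by
      refine integral_congr_ae ?_
      filter_upwards [hcond] with z hz
      rw [hz]
    rw [e0]
    exact integral_mul_condexp_eq P hm hgm hgb hfind_int
  -- decompose both sides
  have hmul_meas : Measurable fun z : Bool × Bel => g z * ((z.2 i : BeliefI) : ℝ) :=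
    hgmeas.mul (measurable_subtype_coe.comp hmeas_proj)
  have hmul_bd : ∀ z : Bool × Bel, |g z * ((z.2 i : BeliefI) : ℝ)| ≤ 3 := by
    intro z
    rw [abs_mul]
    have h1 := hgb z
    have h2 : |((z.2 i : BeliefI) : ℝ)| ≤ 1 := by
      rw [abs_le]; exact ⟨by linarith [(z.2 i).2.1], (z.2 i).2.2⟩
    nlinarith [abs_nonneg (g z), abs_nonneg ((z.2 i : BeliefI) : ℝ)]
  have hmulf_meas : Measurable fun z : Bool × Bel => g z * find z := hgmeas.mul hfind_meas
  have hmulf_bd : ∀ z : Bool × Bel, |g z * find z| ≤ 3 := by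
    intro z
    rw [abs_mul]
    have h1 := hgb z
    have h2 := hfind_bd z
    nlinarith [abs_nonneg (g z), abs_nonneg (find z)]
  have lhs_eq : ∫ z, g z * ((z.2 i : BeliefI) : ℝ) ∂P
      = p * ∫ x, polarLam p (x i).1 * (x i).1 ∂μl
        + (1 - p) * ∫ x, polarLam p (x i).1 * (x i).1 ∂μh := by
    rw [hP]
    exact integral_jointPBin hp0.le hp1.le μl μh hmul_meas hmul_bd
  have rhs_eq : ∫ z, g z * find z ∂P = p * ∫ x, polarLam p (x i).1 ∂μl := by
    rw [hP]
    rw [integral_jointPBin hp0.le hp1.le μl μh hmulf_meas hmulf_bd]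
    have e1 : ∀ x : Bel, find (StateL, x) = 1 := fun x =>
      Set.indicator_of_mem (by simp [Set.mem_setOf_eq]) _
    have e2 : ∀ x : Bel, find (StateH, x) = 0 := fun x =>
      Set.indicator_of_notMem (by simp [Set.mem_setOf_eq, StateH, StateL]) _
    simp only [e1, e2, mul_one, mul_zero, integral_zero]
    ring
  -- integrabilities on μl
  have hint1 : Integrable (fun x : Bel => polarLam p (x i).1 * (x i).1) μl := by
    refine integrable_bdd (((polarLam_measurable p).comp (measurable_val i)).mul
      (measurable_val i)).aestronglyMeasurable (C := 3) ?_
    intro x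
    rw [abs_mul]
    have h1 : |polarLam p ((x i : BeliefI) : ℝ)| ≤ 3 :=
      polarLam_abs_le hp0 hp1 (x i).2.1 (x i).2.2
    have h2 : |((x i : BeliefI) : ℝ)| ≤ 1 := by
      rw [abs_le]; exact ⟨by linarith [(x i).2.1], (x i).2.2⟩
    nlinarith [abs_nonneg (polarLam p ((x i : BeliefI) : ℝ)), abs_nonneg ((x i : BeliefI) : ℝ)]
  have hint2 : Integrable (fun x : Bel => polarLam p (x i).1) μl := by
    refine integrable_bdd ((polarLam_measurable p).comp
      (measurable_val i)).aestronglyMeasurable (C := 3) ?_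
    exact fun x => polarLam_abs_le hp0 hp1 (x i).2.1 (x i).2.2
  have expand : ∫ x, polarLam p (x i).1 * (1 - (x i).1) ∂μl
      = ∫ x, polarLam p (x i).1 ∂μl - ∫ x, polarLam p (x i).1 * (x i).1 ∂μl := by
    rw [← integral_sub hint2 hint1]
    refine integral_congr_ae (Filter.Eventually.of_forall fun x => ?_)
    ring
  have E := step1
  rw [lhs_eq, rhs_eq] at E
  rw [expand]
  linarith




section Main
open MeasureTheory

variable {p : ℝ}

lemma val_nonneg (x : Bel) (i : Fin 2) : (0:ℝ) ≤ (x i).1 := (x i).2.1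
lemma val_le_one (x : Bel) (i : Fin 2) : (x i).1 ≤ 1 := (x i).2.2

lemma abs_diff_meas : Measurable fun x : Bel => |(x 0).1 - (x 1).1| :=
  ((measurable_val 0).sub (measurable_val 1)).abs

lemma abs_diff_bd (x : Bel) : |(|(x 0).1 - (x 1).1|)| ≤ 1 := by
  rw [abs_abs, abs_le]
  constructor <;> nlinarith [val_nonneg x 0, val_le_one x 0, val_nonneg x 1, val_le_one x 1]

lemma lam_term_meas (hp0 : 0 < p) (i : Fin 2) :
    Measurable fun x : Bel => polarLam p (x i).1 * (1 - (x i).1) :=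
  ((polarLam_measurable p).comp (measurable_val i)).mul
    (measurable_const.sub (measurable_val i))

lemma lam_term_bd (hp0 : 0 < p) (hp1 : p < 1) (i : Fin 2) (x : Bel) :
    |polarLam p (x i).1 * (1 - (x i).1)| ≤ 3 := by
  rw [abs_mul]
  have h1 : |polarLam p (x i).1| ≤ 3 := polarLam_abs_le hp0 hp1 (val_nonneg x i) (val_le_one x i)
  have h2 : |1 - (x i).1| ≤ 1 := by
    rw [abs_le]; constructor <;> nlinarith [val_nonneg x i, val_le_one x i]
  nlinarith [abs_nonneg (polarLam p (x i).1), abs_nonneg (1 - (x i).1)]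

lemma lam_term_meas' (hp0 : 0 < p) (i : Fin 2) :
    Measurable fun x : Bel => polarLam p (x i).1 * (x i).1 :=
  ((polarLam_measurable p).comp (measurable_val i)).mul (measurable_val i)

lemma lam_term_bd' (hp0 : 0 < p) (hp1 : p < 1) (i : Fin 2) (x : Bel) :
    |polarLam p (x i).1 * (x i).1| ≤ 3 := by
  rw [abs_mul]
  have h1 : |polarLam p (x i).1| ≤ 3 := polarLam_abs_le hp0 hp1 (val_nonneg x i) (val_le_one x i)
  have h2 : |(x i).1| ≤ 1 := by
    rw [abs_le]; constructor <;> nlinarith [val_nonneg x i, val_le_one x i]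
  nlinarith [abs_nonneg (polarLam p (x i).1), abs_nonneg ((x i).1)]

theorem polar_upper_bound (hp0 : 0 < p) (hp1 : p < 1)
    (μl μh : Measure Bel) (hfeas : FeasibleBin p μl μh) :
    (∫ x, |(x 0).1 - (x 1).1| ∂(ENNReal.ofReal p • μl + ENNReal.ofReal (1 - p) • μh))
      ≤ 2 * p * (1 - p) := by
  obtain ⟨hPl, hPh, hcond⟩ := hfeas
  haveI := hPl; haveI := hPh
  -- integrabilities
  have hI_abs_l : Integrable (fun x : Bel => |(x 0).1 - (x 1).1|) μl :=
    integrable_bdd abs_diff_meas.aestronglyMeasurable abs_diff_bd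
  have hI_abs_h : Integrable (fun x : Bel => |(x 0).1 - (x 1).1|) μh :=
    integrable_bdd abs_diff_meas.aestronglyMeasurable abs_diff_bd
  have hI_u0l : Integrable (fun x : Bel => polarLam p (x 0).1 * (1 - (x 0).1)) μl :=
    integrable_bdd (lam_term_meas hp0 0).aestronglyMeasurable (lam_term_bd hp0 hp1 0)
  have hI_u1l : Integrable (fun x : Bel => polarLam p (x 1).1 * (1 - (x 1).1)) μl :=
    integrable_bdd (lam_term_meas hp0 1).aestronglyMeasurable (lam_term_bd hp0 hp1 1)
  have hI_u0h : Integrable (fun x : Bel => polarLam p (x 0).1 * (x 0).1) μh :=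
    integrable_bdd (lam_term_meas' hp0 0).aestronglyMeasurable (lam_term_bd' hp0 hp1 0)
  have hI_u1h : Integrable (fun x : Bel => polarLam p (x 1).1 * (x 1).1) μh :=
    integrable_bdd (lam_term_meas' hp0 1).aestronglyMeasurable (lam_term_bd' hp0 hp1 1)
  rw [integral_two_smul_add hp0.le hp1.le μl μh hI_abs_l hI_abs_h]
  -- bound each piece
  have hl : ∫ x, |(x 0).1 - (x 1).1| ∂μl
      ≤ 2*(1-p)^2 + (∫ x, polarLam p (x 0).1 * (1 - (x 0).1) ∂μl)
        + ∫ x, polarLam p (x 1).1 * (1 - (x 1).1) ∂μl := by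
    have hmono : ∫ x, |(x 0).1 - (x 1).1| ∂μl
        ≤ ∫ x, (2*(1-p)^2 + polarLam p (x 0).1 * (1 - (x 0).1)
            + polarLam p (x 1).1 * (1 - (x 1).1)) ∂μl := by
      refine integral_mono hI_abs_l ((integrable_const _).add hI_u0l |>.add hI_u1l) ?_
      intro x
      exact polar_key_l hp0 hp1 (val_nonneg x 0) (val_le_one x 0) (val_nonneg x 1) (val_le_one x 1)
    calc ∫ x, |(x 0).1 - (x 1).1| ∂μl ≤ _ := hmono
      _ = 2*(1-p)^2 + (∫ x, polarLam p (x 0).1 * (1 - (x 0).1) ∂μl)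
          + ∫ x, polarLam p (x 1).1 * (1 - (x 1).1) ∂μl := by
        have hc : Integrable (fun _ : Bel => 2*(1-p)^2) μl := integrable_const _
        have h1 : Integrable (fun x : Bel =>
            2*(1-p)^2 + polarLam p (x 0).1 * (1 - (x 0).1)) μl := hc.add hI_u0l
        rw [integral_add h1 hI_u1l, integral_add hc hI_u0l, integral_const]
        simp [measure_univ]
  have hh : ∫ x, |(x 0).1 - (x 1).1| ∂μh
      ≤ 2*p^2 - (∫ x, polarLam p (x 0).1 * (x 0).1 ∂μh)
        - ∫ x, polarLam p (x 1).1 * (x 1).1 ∂μh := by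
    have hmono : ∫ x, |(x 0).1 - (x 1).1| ∂μh
        ≤ ∫ x, (2*p^2 - polarLam p (x 0).1 * (x 0).1
            - polarLam p (x 1).1 * (x 1).1) ∂μh := by
      refine integral_mono hI_abs_h (((integrable_const _).sub hI_u0h).sub hI_u1h) ?_
      intro x
      exact polar_key_h hp0 hp1 (val_nonneg x 0) (val_le_one x 0) (val_nonneg x 1) (val_le_one x 1)
    calc ∫ x, |(x 0).1 - (x 1).1| ∂μh ≤ _ := hmono
      _ = 2*p^2 - (∫ x, polarLam p (x 0).1 * (x 0).1 ∂μh)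
          - ∫ x, polarLam p (x 1).1 * (x 1).1 ∂μh := by
        have hc : Integrable (fun _ : Bel => 2*p^2) μh := integrable_const _
        have h1 : Integrable (fun x : Bel =>
            2*p^2 - polarLam p (x 0).1 * (x 0).1) μh := hc.sub hI_u0h
        rw [integral_sub h1 hI_u1h, integral_sub hc hI_u0h, integral_const]
        simp [measure_univ]
  have hb0 := polar_bracket hp0 hp1 μl μh 0 (hcond 0).1
  have hb1 := polar_bracket hp0 hp1 μl μh 1 (hcond 1).1
  have key : p * (2*(1-p)^2) + (1-p) * (2*p^2) = 2*p*(1-p) := by ring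
  nlinarith [mul_le_mul_of_nonneg_left hl hp0.le,
    mul_le_mul_of_nonneg_left hh (by linarith : (0:ℝ) ≤ 1 - p)]

end Main



section Example
open MeasureTheory

lemma indH_measurable : Measurable
    (Set.indicator {z : Bool × Bel | z.1 = StateH} (fun _ => (1:ℝ))) := by
  have hS : MeasurableSet {z : Bool × Bel | z.1 = StateH} := by
    have : {z : Bool × Bel | z.1 = StateH} = Prod.fst ⁻¹' {StateH} := rfl
    rw [this]; exact measurable_fst (measurableSet_singleton _)
  exact measurable_const.indicator hS

variable {p : ℝ}

lemma jointPBin_dirac_eq (p : ℝ) (A B : Bel) :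
    jointPBin p (Measure.dirac A) (Measure.dirac B)
      = ENNReal.ofReal p • Measure.dirac (StateL, A)
        + ENNReal.ofReal (1 - p) • Measure.dirac (StateH, B) := by
  rw [jointPBin, Measure.dirac_prod_dirac, Measure.dirac_prod_dirac]

lemma ae_jointPBin_dirac {p : ℝ} (A B : Bel) {q : Bool × Bel → Prop}
    (h1 : q (StateL, A)) (h2 : q (StateH, B)) :
    ∀ᵐ z ∂(jointPBin p (Measure.dirac A) (Measure.dirac B)), q z := by
  rw [jointPBin_dirac_eq, ae_add_measure_iff]
  constructor
  · exact Measure.ae_smul_measure (by rw [ae_dirac_eq]; exact h1) _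
  · exact Measure.ae_smul_measure (by rw [ae_dirac_eq]; exact h2) _

lemma isFiniteMeasure_smul_dirac {α : Type*} [MeasurableSpace α] (c : ℝ) (z : α) :
    IsFiniteMeasure (ENNReal.ofReal c • Measure.dirac z) := by
  constructor
  rw [Measure.smul_apply, smul_eq_mul]
  exact ENNReal.mul_lt_top ENNReal.ofReal_lt_top (measure_lt_top _ _)

open Classical in
lemma setIntegral_jointPBin_dirac (hp0 : 0 < p) (hp1 : p < 1) (A B : Bel)
    {f : Bool × Bel → ℝ} (hf : StronglyMeasurable f) {C : ℝ} (hb : ∀ z, |f z| ≤ C)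
    {s : Set (Bool × Bel)} (hs : MeasurableSet s) :
    ∫ z in s, f z ∂(jointPBin p (Measure.dirac A) (Measure.dirac B))
      = (if (StateL, A) ∈ s then p * f (StateL, A) else 0)
        + (if (StateH, B) ∈ s then (1-p) * f (StateH, B) else 0) := by
  classical
  haveI h1 := isFiniteMeasure_smul_dirac p ((StateL, A) : Bool × Bel)
  haveI h2 := isFiniteMeasure_smul_dirac (1-p) ((StateH, B) : Bool × Bel)
  have i1 : Integrable f ((ENNReal.ofReal p • Measure.dirac ((StateL, A) : Bool × Bel)).restrict s) :=
    (integrable_bdd hf.aestronglyMeasurable hb).restrict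
  have i2 : Integrable f ((ENNReal.ofReal (1-p) • Measure.dirac ((StateH, B) : Bool × Bel)).restrict s) :=
    (integrable_bdd hf.aestronglyMeasurable hb).restrict
  rw [jointPBin_dirac_eq, Measure.restrict_add, integral_add_measure i1 i2,
    Measure.restrict_smul, Measure.restrict_smul, integral_smul_measure, integral_smul_measure,
    setIntegral_dirac' hf _ hs, setIntegral_dirac' hf _ hs,
    ENNReal.toReal_ofReal hp0.le, ENNReal.toReal_ofReal (by linarith : (0:ℝ) ≤ 1 - p)]
  split_ifs <;> simp [smul_eq_mul]

end Example



section Example2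
open MeasureTheory

variable {p : ℝ}

lemma hproj0 (p : ℝ) (hp0 : 0 < p) (hp1 : p < 1) :
    Measurable (fun z : Bool × Bel => z.2 0) := by
  exact (measurable_pi_apply _).comp measurable_snd

lemma hproj1 (p : ℝ) (hp0 : 0 < p) (hp1 : p < 1) :
    Measurable (fun z : Bool × Bel => z.2 1) := by
  exact (measurable_pi_apply _).comp measurable_snd

theorem example_feasible (hp0 : 0 < p) (hp1 : p < 1) :
    FeasibleBin p
      (Measure.dirac (fun i : Fin 2 =>
        if i = 0 then (⟨p, ⟨hp0.le, hp1.le⟩⟩ : BeliefI) else ⟨1, by norm_num⟩))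
      (Measure.dirac (fun i : Fin 2 =>
        if i = 0 then (⟨p, ⟨hp0.le, hp1.le⟩⟩ : BeliefI) else ⟨0, by norm_num⟩)) := by
  classical
  set A : Bel := fun i : Fin 2 =>
    if i = 0 then (⟨p, ⟨hp0.le, hp1.le⟩⟩ : BeliefI) else ⟨1, by norm_num⟩ with hA
  set B : Bel := fun i : Fin 2 =>
    if i = 0 then (⟨p, ⟨hp0.le, hp1.le⟩⟩ : BeliefI) else ⟨0, by norm_num⟩ with hB
  have hA0 : ((A 0 : BeliefI) : ℝ) = p := by simp [hA]
  have hA1 : ((A 1 : BeliefI) : ℝ) = 1 := by norm_num [hA]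
  have hB0 : ((B 0 : BeliefI) : ℝ) = p := by simp [hB]
  have hB1 : ((B 1 : BeliefI) : ℝ) = 0 := by norm_num [hB]
  have hAB0 : A 0 = B 0 := by simp [hA, hB]
  set P := jointPBin p (Measure.dirac A) (Measure.dirac B) with hPd
  haveI : IsProbabilityMeasure P := jointPBin_isProb hp0.le hp1.le _ _
  -- indicator values
  have indL_L : Set.indicator {z : Bool × Bel | z.1 = StateL} (fun _ => (1:ℝ)) (StateL, A) = 1 := by
    simp [Set.indicator_apply]
  have indL_H : Set.indicator {z : Bool × Bel | z.1 = StateL} (fun _ => (1:ℝ)) (StateH, B) = 0 := by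
    simp [Set.indicator_apply, StateH, StateL]
  have indH_L : Set.indicator {z : Bool × Bel | z.1 = StateH} (fun _ => (1:ℝ)) (StateL, A) = 0 := by
    simp [Set.indicator_apply, StateH, StateL]
  have indH_B : Set.indicator {z : Bool × Bel | z.1 = StateH} (fun _ => (1:ℝ)) (StateH, B) = 1 := by
    simp [Set.indicator_apply]
  have indL_bd : ∀ z : Bool × Bel,
      |Set.indicator {z : Bool × Bel | z.1 = StateL} (fun _ => (1:ℝ)) z| ≤ 1 := by
    intro z; rw [Set.indicator_apply]; split_ifs <;> norm_num
  have indH_bd : ∀ z : Bool × Bel,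
      |Set.indicator {z : Bool × Bel | z.1 = StateH} (fun _ => (1:ℝ)) z| ≤ 1 := by
    intro z; rw [Set.indicator_apply]; split_ifs <;> norm_num
  have hintL : Integrable (Set.indicator {z : Bool × Bel | z.1 = StateL} (fun _ => (1:ℝ))) P :=
    integrable_bdd indL_measurable.aestronglyMeasurable indL_bd
  have hintH : Integrable (Set.indicator {z : Bool × Bel | z.1 = StateH} (fun _ => (1:ℝ))) P :=
    integrable_bdd indH_measurable.aestronglyMeasurable indH_bd
  refine ⟨by infer_instance, by infer_instance, fun i => ?_⟩
  fin_cases i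
  · -- receiver 0 : constant belief p
    constructor
    · -- StateL condition
      have hcp : (fun _ : Bool × Bel => p) =ᵐ[P]
          P[Set.indicator {z : Bool × Bel | z.1 = StateL} (fun _ => (1:ℝ)) |
            MeasurableSpace.comap (fun z : Bool × Bel => z.2 0) inferInstance] := by
        refine ae_eq_condExp_of_forall_setIntegral_eq
          (measurable_iff_comap_le.mp (hproj0 p hp0 hp1))
          hintL (fun s _ _ => (integrable_const p).integrableOn) (fun s hs _ => ?_)
          stronglyMeasurable_const.aestronglyMeasurable
        obtain ⟨t, ht, rfl⟩ := hs
        have hsamb : MeasurableSet ((fun z : Bool × Bel => z.2 0) ⁻¹' t) :=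
          (hproj0 p hp0 hp1) ht
        rw [hPd, setIntegral_jointPBin_dirac hp0 hp1 A B stronglyMeasurable_const
            (C := |p|) (fun _ => le_refl _) hsamb,
          setIntegral_jointPBin_dirac hp0 hp1 A B indL_measurable.stronglyMeasurable
            indL_bd hsamb]
        have hmem : (StateL, A) ∈ (fun z : Bool × Bel => z.2 0) ⁻¹' t
            ↔ (StateH, B) ∈ (fun z : Bool × Bel => z.2 0) ⁻¹' t := by
          simp only [Set.mem_preimage]; rw [hAB0]
        by_cases hAt : (StateL, A) ∈ (fun z : Bool × Bel => z.2 0) ⁻¹' t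
        · have hBt := hmem.mp hAt
          rw [if_pos hAt, if_pos hBt, if_pos hAt, if_pos hBt, indL_L, indL_H]; ring
        · have hBt := fun h => hAt (hmem.mpr h)
          rw [if_neg hAt, if_neg hBt, if_neg hAt, if_neg hBt]
      have hxp : (fun z : Bool × Bel => ((z.2 0 : BeliefI) : ℝ)) =ᵐ[P] (fun _ => p) :=
        ae_jointPBin_dirac A B (by simpa using hA0) (by simpa using hB0)
      exact hxp.trans hcp
    · -- StateH condition
      have hcp : (fun _ : Bool × Bel => 1 - p) =ᵐ[P]
          P[Set.indicator {z : Bool × Bel | z.1 = StateH} (fun _ => (1:ℝ)) |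
            MeasurableSpace.comap (fun z : Bool × Bel => z.2 0) inferInstance] := by
        refine ae_eq_condExp_of_forall_setIntegral_eq
          (measurable_iff_comap_le.mp (hproj0 p hp0 hp1))
          hintH (fun s _ _ => (integrable_const (1-p)).integrableOn) (fun s hs _ => ?_)
          stronglyMeasurable_const.aestronglyMeasurable
        obtain ⟨t, ht, rfl⟩ := hs
        have hsamb : MeasurableSet ((fun z : Bool × Bel => z.2 0) ⁻¹' t) :=
          (hproj0 p hp0 hp1) ht
        rw [hPd, setIntegral_jointPBin_dirac hp0 hp1 A B stronglyMeasurable_const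
            (C := |1-p|) (fun _ => le_refl _) hsamb,
          setIntegral_jointPBin_dirac hp0 hp1 A B indH_measurable.stronglyMeasurable
            indH_bd hsamb]
        have hmem : (StateL, A) ∈ (fun z : Bool × Bel => z.2 0) ⁻¹' t
            ↔ (StateH, B) ∈ (fun z : Bool × Bel => z.2 0) ⁻¹' t := by
          simp only [Set.mem_preimage]; rw [hAB0]
        by_cases hAt : (StateL, A) ∈ (fun z : Bool × Bel => z.2 0) ⁻¹' t
        · have hBt := hmem.mp hAt
          rw [if_pos hAt, if_pos hBt, if_pos hAt, if_pos hBt, indH_L, indH_B]; ring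
        · have hBt := fun h => hAt (hmem.mpr h)
          rw [if_neg hAt, if_neg hBt, if_neg hAt, if_neg hBt]
      have hxp : (fun z : Bool × Bel => 1 - ((z.2 0 : BeliefI) : ℝ)) =ᵐ[P] (fun _ => 1 - p) :=
        ae_jointPBin_dirac A B
          (by show (1:ℝ) - ((A 0 : BeliefI) : ℝ) = 1 - p; rw [hA0])
          (by show (1:ℝ) - ((B 0 : BeliefI) : ℝ) = 1 - p; rw [hB0])
      exact hxp.trans hcp
  · -- receiver 1 : fully informed
    constructor
    · have hkey : (fun z : Bool × Bel => ((z.2 1 : BeliefI) : ℝ)) =ᵐ[P]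
          Set.indicator {z : Bool × Bel | z.1 = StateL} (fun _ => (1:ℝ)) :=
        ae_jointPBin_dirac A B (by rw [indL_L]; exact hA1) (by rw [indL_H]; exact hB1)
      have hsm : StronglyMeasurable[MeasurableSpace.comap
          (fun z : Bool × Bel => z.2 1) inferInstance]
          (fun z : Bool × Bel => ((z.2 1 : BeliefI) : ℝ)) :=
        stronglyMeasurable_comap' _ measurable_subtype_coe
      have hint : Integrable (fun z : Bool × Bel => ((z.2 1 : BeliefI) : ℝ)) P := by
        refine integrable_bdd (measurable_subtype_coe.comp
          ((measurable_pi_apply _).comp measurable_snd)).aestronglyMeasurable (C := 1) ?_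
        intro z
        rw [abs_le]
        exact ⟨by linarith [(z.2 1).2.1], (z.2 1).2.2⟩
      have h3 := condExp_of_stronglyMeasurable
        (measurable_iff_comap_le.mp (hproj1 p hp0 hp1)) hsm hint
      have h4 := condExp_congr_ae (m := MeasurableSpace.comap
        (fun z : Bool × Bel => z.2 1) inferInstance) hkey.symm
      rw [h3] at h4
      exact h4.symm
    · have hkey : (fun z : Bool × Bel => 1 - ((z.2 1 : BeliefI) : ℝ)) =ᵐ[P]
          Set.indicator {z : Bool × Bel | z.1 = StateH} (fun _ => (1:ℝ)) :=
        ae_jointPBin_dirac A B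
          (by show (1:ℝ) - ((A 1 : BeliefI) : ℝ) = _; rw [indH_L, hA1]; ring)
          (by show (1:ℝ) - ((B 1 : BeliefI) : ℝ) = _; rw [indH_B, hB1]; ring)
      have hsm : StronglyMeasurable[MeasurableSpace.comap
          (fun z : Bool × Bel => z.2 1) inferInstance]
          (fun z : Bool × Bel => 1 - ((z.2 1 : BeliefI) : ℝ)) :=
        stronglyMeasurable_comap' _ (measurable_const.sub measurable_subtype_coe)
      have hint : Integrable (fun z : Bool × Bel => 1 - ((z.2 1 : BeliefI) : ℝ)) P := by
        refine integrable_bdd (measurable_const.sub (measurable_subtype_coe.comp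
          ((measurable_pi_apply _).comp measurable_snd))).aestronglyMeasurable (C := 1) ?_
        intro z
        rw [abs_le]
        constructor <;> [linarith [(z.2 1).2.2]; linarith [(z.2 1).2.1]]
      have h3 := condExp_of_stronglyMeasurable
        (measurable_iff_comap_le.mp (hproj1 p hp0 hp1)) hsm hint
      have h4 := condExp_congr_ae (m := MeasurableSpace.comap
        (fun z : Bool × Bel => z.2 1) inferInstance) hkey.symm
      rw [h3] at h4
      exact h4.symm

end Example2



section Value
open MeasureTheory
variable {p : ℝ}

theorem example_value (hp0 : 0 < p) (hp1 : p < 1) :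
    (∫ x, |(x 0).1 - (x 1).1|
        ∂(ENNReal.ofReal p •
            (Measure.dirac (fun i : Fin 2 =>
              if i = 0 then (⟨p, ⟨hp0.le, hp1.le⟩⟩ : BeliefI) else ⟨1, by norm_num⟩)) +
          ENNReal.ofReal (1 - p) •
            (Measure.dirac (fun i : Fin 2 =>
              if i = 0 then (⟨p, ⟨hp0.le, hp1.le⟩⟩ : BeliefI) else ⟨0, by norm_num⟩))))
      = 2 * p * (1 - p) := by
  have iA : Integrable (fun x : Bel => |(x 0).1 - (x 1).1|)
      (Measure.dirac (fun i : Fin 2 =>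
        if i = 0 then (⟨p, ⟨hp0.le, hp1.le⟩⟩ : BeliefI) else ⟨1, by norm_num⟩)) :=
    integrable_bdd abs_diff_meas.aestronglyMeasurable abs_diff_bd
  have iB : Integrable (fun x : Bel => |(x 0).1 - (x 1).1|)
      (Measure.dirac (fun i : Fin 2 =>
        if i = 0 then (⟨p, ⟨hp0.le, hp1.le⟩⟩ : BeliefI) else ⟨0, by norm_num⟩)) :=
    integrable_bdd abs_diff_meas.aestronglyMeasurable abs_diff_bd
  rw [integral_two_smul_add hp0.le hp1.le _ _ iA iB, integral_dirac, integral_dirac]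
  norm_num
  rw [abs_of_nonpos (by linarith), abs_of_nonneg hp0.le]
  ring

end Value



/-- the maximal expected disagreement `E|x₁ − x₂|` over feasible belief
distributions is `2p(1−p)`, attained by the full-information/no-information policy. -/
theorem one_polarization_bound
    (p : ℝ) (hp0 : 0 < p) (hp1 : p < 1) :
    (∀ μl μh : Measure (Fin 2 → BeliefI), FeasibleBin p μl μh →
      (∫ x, |(x 0).1 - (x 1).1|
          ∂(ENNReal.ofReal p • μl + ENNReal.ofReal (1 - p) • μh)) ≤ 2 * p * (1 - p)) ∧
    (FeasibleBin p
        (Measure.dirac (fun i : Fin 2 =>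
          if i = 0 then (⟨p, ⟨hp0.le, hp1.le⟩⟩ : BeliefI) else ⟨1, by norm_num⟩))
        (Measure.dirac (fun i : Fin 2 =>
          if i = 0 then (⟨p, ⟨hp0.le, hp1.le⟩⟩ : BeliefI) else ⟨0, by norm_num⟩)) ∧
      (∫ x, |(x 0).1 - (x 1).1|
          ∂(ENNReal.ofReal p •
              (Measure.dirac (fun i : Fin 2 =>
                if i = 0 then (⟨p, ⟨hp0.le, hp1.le⟩⟩ : BeliefI) else ⟨1, by norm_num⟩)) +
            ENNReal.ofReal (1 - p) •
              (Measure.dirac (fun i : Fin 2 =>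
                if i = 0 then (⟨p, ⟨hp0.le, hp1.le⟩⟩ : BeliefI) else ⟨0, by norm_num⟩))))
        = 2 * p * (1 - p)) := by
  exact ⟨fun μl μh h => polar_upper_bound hp0 hp1 μl μh h,
    example_feasible hp0 hp1, example_value hp0 hp1⟩
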